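/- Let G be a unicyclic multigraph U^r_{n,m} as above. Then the number of facets of its spanning simplicial complex (equivalently, the number of spanning trees) equals f_d + 0 computed from the formula: ∏_{j=m+1}^{m+r''} t_j · ( (m − r')·∏_{i=1}^{r'} t_i + ∑_{i=1}^{r'} ∏_{b≠i, 1≤b≤r'} t_b ). -/

import Mathlib

/-! A spanning tree uses at most one edge of each parallel class, and the classes it uses carry
a tree on `|V|` vertices, i.e. all classes but one. Omitting a bridge class leaves the whole
cycle, so no tree arises; omitting a cycle class leaves a connected graph, since a cycle edge is
never a bridge. Hence spanning trees correspond to a missing cycle class `i` together with one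
representative of every other class, and there are `∑ i, (∏_{b ≠ i} t b) * ∏ j, u j` of them;
as `t b = 1` for `b ≥ r'`, this sum is the stated formula. -/

/-- A subset `T` of the edges of a multigraph (given by its endpoint map `ends`)
is the edge set of a spanning tree. -/
def IsSpanningTree {V E : Type} (ends : E → Sym2 V) (T : Finset E) : Prop :=
  Set.InjOn ends T ∧ (∀ e ∈ T, ¬ (ends e).IsDiag) ∧
    (SimpleGraph.fromEdgeSet (ends '' T)).IsTree

/-- Edge type of the unicyclic multigraph `U^r_{n,m}`: parallel classes on the `m`
cycle positions (sizes `t i`), parallel bridge classes (sizes `u j`), and `v'`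
single bridges. -/
abbrev UniE (m r'' v' : ℕ) (t : Fin m → ℕ) (u : Fin r'' → ℕ) : Type :=
  (Σ i : Fin m, Fin (t i)) ⊕ (Σ j : Fin r'', Fin (u j)) ⊕ Fin v'

/-- Endpoint map: cycle classes join consecutive cycle vertices `c i, c (i+1 mod m)`,
bridge classes have endpoints `bp j`, single bridges `sp a`. -/
def uniEnds {V : Type} (m r'' v' : ℕ) (t : Fin m → ℕ) (u : Fin r'' → ℕ)
    (c : Fin m → V) (bp : Fin r'' → Sym2 V) (sp : Fin v' → Sym2 V)
    (hm : 0 < m) : UniE m r'' v' t u → Sym2 V :=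
  Sum.elim (fun e => s(c e.1, c ⟨(e.1.val + 1) % m, Nat.mod_lt _ hm⟩))
    (Sum.elim (fun e => bp e.1) sp)

/-- Endpoint pairs of the parallel classes. -/
def uniClassEnds {V : Type} (m r'' v' : ℕ)
    (c : Fin m → V) (bp : Fin r'' → Sym2 V) (sp : Fin v' → Sym2 V)
    (hm : 0 < m) : (Fin m ⊕ Fin r'' ⊕ Fin v') → Sym2 V :=
  Sum.elim (fun i => s(c i, c ⟨(i.val + 1) % m, Nat.mod_lt _ hm⟩))
    (Sum.elim bp sp)

open Finset SimpleGraph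

theorem Nat.add_mod_ne_self {m i d : ℕ} (hi : i < m) (hd0 : 0 < d) (hd : d < m) :
    (i + d) % m ≠ i := by
  rcases lt_or_ge (i + d) m with h | h
  · rw [Nat.mod_eq_of_lt h]; omega
  · rw [Nat.mod_eq_sub_mod h, Nat.mod_eq_of_lt (by omega)]; omega

theorem Finset.exists_eq_univ_erase_of_card_add_one {α : Type*} [Fintype α] [DecidableEq α]
    {s : Finset α} (h : #s + 1 = Fintype.card α) : ∃ a, s = univ.erase a := by
  obtain ⟨a, ha⟩ := card_eq_one.1 (show #sᶜ = 1 by rw [card_compl]; omega)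
  exact ⟨a, by rw [← compl_singleton, ← ha, compl_compl]⟩

theorem sum_prod_univ_erase_eq {ι M : Type*} [Fintype ι] [DecidableEq ι] [CommSemiring M]
    (s : Finset ι) (t : ι → M) (ht : ∀ i ∉ s, t i = 1) :
    ∑ i, ∏ b ∈ univ.erase i, t b =
      (Fintype.card ι - #s) • ∏ b ∈ s, t b + ∑ i ∈ s, ∏ b ∈ s.erase i, t b := by
  have hprod : ∀ i, ∏ b ∈ univ.erase i, t b = ∏ b ∈ s.erase i, t b := fun i =>
    (prod_subset (erase_subset_erase _ (subset_univ s)) fun b hb hbs =>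
      ht b fun h => hbs (mem_erase.2 ⟨(mem_erase.1 hb).1, h⟩)).symm
  rw [sum_congr rfl fun i _ => hprod i, ← sum_add_sum_compl s, add_comm,
    sum_congr rfl fun i hi => by rw [erase_eq_of_notMem (mem_compl.1 hi)], sum_const,
    card_compl]

theorem natCard_injOn_image_eq {α β : Type*} [Fintype α] [DecidableEq α] [DecidableEq β]
    (f : α → β) (S : Finset β) :
    Nat.card {s : Finset α // Set.InjOn f s ∧ s.image f = S} =
      ∏ b ∈ S, Nat.card {a // f a = b} := by
  let φ : ((b : S) → {a // f a = b}) → {s : Finset α // Set.InjOn f s ∧ s.image f = S} :=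
    fun g => ⟨univ.image fun b => (g b : α), by
      simp only [coe_image, coe_univ, Set.image_univ]
      rintro _ ⟨b, rfl⟩ _ ⟨b', rfl⟩ h
      obtain rfl : b = b' := Subtype.ext (by rw [← (g b).2, ← (g b').2, h])
      rfl, by
      ext x; simp [(g _).2]⟩
  rw [← Nat.card_eq_of_bijective φ ⟨?_, ?_⟩, Nat.card_pi]
  · exact prod_coe_sort S fun b => Nat.card {a // f a = b}
  · intro g g' hgg'
    funext b
    have hb : (g b : α) ∈ (φ g').1 := by rw [← hgg']; exact mem_image_of_mem _ (mem_univ b)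
    obtain ⟨b', -, hb'⟩ := mem_image.1 hb
    obtain rfl : b' = b := Subtype.ext (by rw [← (g' b').2, ← (g b).2, hb'])
    exact Subtype.ext hb'.symm
  · rintro ⟨s, hinj, hs⟩
    have hex : ∀ b : S, ∃ a ∈ s, f a = b := fun b => mem_image.1 (hs ▸ b.2)
    choose a has hfa using hex
    refine ⟨fun b => ⟨a b, hfa b⟩, Subtype.ext ?_⟩
    ext x
    simp only [φ, mem_image, mem_univ, true_and]
    refine ⟨fun ⟨b, hb⟩ => hb ▸ has b, fun hx => ?_⟩
    have hfx : f x ∈ S := hs ▸ mem_image_of_mem f hx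
    exact ⟨⟨f x, hfx⟩, hinj (has _) hx (hfa _)⟩

theorem natCard_and_exists_eq {α β ι : Type*} [Fintype ι] [Finite α] {P : α → Prop}
    {F : α → β} {g : ι → β} (hg : Function.Injective g) :
    Nat.card {x // P x ∧ ∃ i, F x = g i} = ∑ i, Nat.card {x // P x ∧ F x = g i} := by
  rw [← Nat.card_sigma]
  refine (Nat.card_eq_of_bijective (fun y : Σ i, {x // P x ∧ F x = g i} =>
    (⟨y.2, y.2.2.1, y.1, y.2.2.2⟩ : {x // P x ∧ ∃ i, F x = g i})) ⟨?_, ?_⟩).symm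
  · rintro ⟨i, x, _, hx⟩ ⟨i', x', _, hx'⟩ h
    obtain rfl : x = x' := congrArg Subtype.val h
    obtain rfl : i = i' := hg (hx.symm.trans hx')
    rfl
  · rintro ⟨x, hP, i, hx⟩
    exact ⟨⟨i, x, hP, hx⟩, rfl⟩

theorem SimpleGraph.reachable_of_adj_succ {V : Type*} {G : SimpleGraph V} (p : ℕ → V) (n : ℕ)
    (h : ∀ k < n, G.Adj (p k) (p (k + 1))) : G.Reachable (p 0) (p n) := by
  rw [reachable_iff_reflTransGen]
  refine (reflTransGen_of_succ_of_le (fun a b => G.Adj (p a) (p b)) (fun k hk => ?_)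
    n.zero_le).lift p fun _ _ => id
  simpa using h k (Set.mem_Ico.1 hk).2

theorem SimpleGraph.natCard_edgeSet_fromEdgeSet_image {V α : Type*} {f : α → Sym2 V}
    (hf : Function.Injective f) (hnd : ∀ a, ¬ (f a).IsDiag) (S : Finset α) :
    Nat.card (fromEdgeSet (f '' S)).edgeSet = #S := by
  rw [edgeSet_fromEdgeSet, sdiff_eq_left.2, Nat.card_image_of_injective hf,
    Nat.card_coe_set_eq, Set.ncard_coe_finset]
  exact Set.disjoint_left.2 fun _ ⟨a, _, ha⟩ => ha ▸ hnd a

def cycleSucc {m : ℕ} (hm : 0 < m) (i : Fin m) : Fin m := ⟨(i + 1) % m, Nat.mod_lt _ hm⟩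

section Cycle

variable {V : Type*} {G : SimpleGraph V} {m : ℕ} (hm : 0 < m) (c : Fin m → V)

theorem reachable_cycleSucc_of_adj (i : Fin m)
    (h : ∀ k ≠ i, G.Adj (c k) (c (cycleSucc hm k))) :
    G.Reachable (c (cycleSucc hm i)) (c i) := by
  -- the walk `c (i + 1), c (i + 2), …, c (i + m) = c i`, which avoids the edge at `i`
  let p : ℕ → V := fun d => c ⟨(i + 1 + d) % m, Nat.mod_lt _ hm⟩
  have hp : G.Reachable (p 0) (p (m - 1)) := reachable_of_adj_succ p (m - 1) fun k hk => by
    have hki : (⟨(i + 1 + k) % m, Nat.mod_lt _ hm⟩ : Fin m) ≠ i := fun h =>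
      Nat.add_mod_ne_self (d := k + 1) i.2 k.succ_pos (by omega)
        (by rw [← add_assoc, add_right_comm]; exact congrArg Fin.val h)
    convert h _ hki using 3
    simp [cycleSucc, add_assoc]
  convert hp using 2
  · simp [cycleSucc]
  · simp [show (i : ℕ) + 1 + (m - 1) = i + m by omega, Nat.mod_eq_of_lt i.2]

theorem not_isBridge_of_forall_adj_cycleSucc
    (hinj : Function.Injective fun k => s(c k, c (cycleSucc hm k)))
    (hadj : ∀ k, G.Adj (c k) (c (cycleSucc hm k))) (i : Fin m) :
    ¬ G.IsBridge s(c i, c (cycleSucc hm i)) := by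
  rw [isBridge_iff, not_not]
  exact (reachable_cycleSucc_of_adj hm c i fun k hk =>
    (deleteEdges_adj ..).2 ⟨hadj k, fun h => hk (hinj h)⟩).symm

end Cycle

def uniClass {m r'' v' : ℕ} {t : Fin m → ℕ} {u : Fin r'' → ℕ} :
    UniE m r'' v' t u → Fin m ⊕ Fin r'' ⊕ Fin v' :=
  Sum.map Sigma.fst (Sum.map Sigma.fst id)

section Unicyclic

variable {V : Type} {m r'' v' : ℕ} (hm : 0 < m) {c : Fin m → V}
  {bp : Fin r'' → Sym2 V} {sp : Fin v' → Sym2 V}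

theorem uniEnds_eq_comp (t : Fin m → ℕ) (u : Fin r'' → ℕ) :
    uniEnds m r'' v' t u c bp sp hm = uniClassEnds m r'' v' c bp sp hm ∘ uniClass := by
  funext e
  rcases e with _ | _ | _ <;> rfl

theorem uniClassEnds_not_isDiag (hm1 : 1 < m) (hc : Function.Injective c)
    (hbp : ∀ j, ¬ (bp j).IsDiag) (hsp : ∀ a, ¬ (sp a).IsDiag) :
    ∀ κ, ¬ (uniClassEnds m r'' v' c bp sp hm κ).IsDiag
  | .inl i => by
    simpa [uniClassEnds, hc.eq_iff, Fin.ext_iff] using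
      (Nat.add_mod_ne_self i.2 one_pos hm1).symm
  | .inr (.inl j) => hbp j
  | .inr (.inr a) => hsp a

theorem fromEdgeSet_uniClassEnds_adj_cycleSucc
    (hnd : ∀ κ, ¬ (uniClassEnds m r'' v' c bp sp hm κ).IsDiag)
    {S : Set (Fin m ⊕ Fin r'' ⊕ Fin v')} (hS : ∀ k, .inl k ∈ S) (k : Fin m) :
    (fromEdgeSet (uniClassEnds m r'' v' c bp sp hm '' S)).Adj (c k) (c (cycleSucc hm k)) :=
  (fromEdgeSet_adj _).2
    ⟨⟨.inl k, hS k, rfl⟩, fun h => hnd (.inl k) (Sym2.mk_isDiag_iff.2 h)⟩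

theorem isTree_fromEdgeSet_uniClassEnds_iff [Fintype V] (hm1 : 1 < m)
    (hc : Function.Injective c) (hbp : ∀ j, ¬ (bp j).IsDiag) (hsp : ∀ a, ¬ (sp a).IsDiag)
    (hinj : Function.Injective (uniClassEnds m r'' v' c bp sp hm))
    (hconn : (fromEdgeSet (Set.range (uniClassEnds m r'' v' c bp sp hm))).Connected)
    (hV : Fintype.card V = m + r'' + v') (S : Finset (Fin m ⊕ Fin r'' ⊕ Fin v')) :
    (fromEdgeSet (uniClassEnds m r'' v' c bp sp hm '' S)).IsTree ↔
      ∃ i, S = univ.erase (.inl i) := by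
  set cE := uniClassEnds m r'' v' c bp sp hm
  have hnd := uniClassEnds_not_isDiag hm hm1 hc hbp hsp
  have hcyc : Function.Injective fun k => s(c k, c (cycleSucc hm k)) :=
    hinj.comp Sum.inl_injective
  have hcard := natCard_edgeSet_fromEdgeSet_image hinj hnd
  constructor
  · intro htree
    have hS := (isTree_iff_connected_and_card.1 htree).2
    rw [hcard, Nat.card_eq_fintype_card, hV] at hS
    obtain ⟨κ | y, rfl⟩ := exists_eq_univ_erase_of_card_add_one (s := S)
      (by simpa [add_assoc] using hS)
    · exact ⟨κ, rfl⟩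
    have hadj := fromEdgeSet_uniClassEnds_adj_cycleSucc hm hnd
      (S := ↑(univ.erase (.inr y : Fin m ⊕ Fin r'' ⊕ Fin v'))) (fun k => by simp)
    exact absurd (isAcyclic_iff_forall_adj_isBridge.1 htree.isAcyclic (hadj ⟨0, hm⟩))
      (not_isBridge_of_forall_adj_cycleSucc hm c hcyc hadj _)
  · rintro ⟨i, rfl⟩
    rw [isTree_iff_connected_and_card, hcard, Nat.card_eq_fintype_card, hV,
      card_erase_of_mem (mem_univ _), card_univ]
    refine ⟨?_, by simp only [Fintype.card_sum, Fintype.card_fin]; omega⟩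
    have hdel : fromEdgeSet (cE '' ↑(univ.erase (.inl i : Fin m ⊕ Fin r'' ⊕ Fin v'))) =
        (fromEdgeSet (Set.range cE)).deleteEdges {s(c i, c (cycleSucc hm i))} := by
      rw [deleteEdges_fromEdgeSet, coe_erase, Set.image_sdiff hinj, coe_univ, Set.image_univ,
        Set.image_singleton]
      rfl
    rw [hdel]
    refine hconn.connected_delete_edge_of_not_isBridge
      (not_isBridge_of_forall_adj_cycleSucc hm c hcyc ?_ i)
    simpa only [Set.image_univ] using
      fromEdgeSet_uniClassEnds_adj_cycleSucc hm hnd (S := Set.univ) fun _ => trivial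

theorem isSpanningTree_uniEnds_iff [Fintype V] (t : Fin m → ℕ) (u : Fin r'' → ℕ)
    (hm1 : 1 < m) (hc : Function.Injective c) (hbp : ∀ j, ¬ (bp j).IsDiag)
    (hsp : ∀ a, ¬ (sp a).IsDiag) (hinj : Function.Injective (uniClassEnds m r'' v' c bp sp hm))
    (hconn : (fromEdgeSet (Set.range (uniClassEnds m r'' v' c bp sp hm))).Connected)
    (hV : Fintype.card V = m + r'' + v') (T : Finset (UniE m r'' v' t u)) :
    IsSpanningTree (uniEnds m r'' v' t u c bp sp hm) T ↔
      Set.InjOn uniClass (T : Set (UniE m r'' v' t u)) ∧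
        ∃ i, T.image uniClass = univ.erase (.inl i) := by
  rw [IsSpanningTree, uniEnds_eq_comp, Set.image_comp, ← coe_image,
    isTree_fromEdgeSet_uniClassEnds_iff hm hm1 hc hbp hsp hinj hconn hV]
  exact ⟨fun ⟨hT, _, htree⟩ => ⟨hT.of_comp, htree⟩, fun ⟨hT, htree⟩ =>
    ⟨hinj.comp_injOn hT, fun _ _ => uniClassEnds_not_isDiag hm hm1 hc hbp hsp _, htree⟩⟩

end Unicyclic

section Count

variable {m r'' v' : ℕ} (t : Fin m → ℕ) (u : Fin r'' → ℕ)

theorem natCard_uniClass_eq (κ : Fin m ⊕ Fin r'' ⊕ Fin v') :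
    Nat.card {e : UniE m r'' v' t u // uniClass e = κ} = Sum.elim t (Sum.elim u 1) κ := by
  rcases κ with i | j | a
  · rw [Sum.elim_inl, ← Nat.card_fin (t i)]
    refine (Nat.card_eq_of_bijective (fun x => ⟨.inl ⟨i, x⟩, rfl⟩)
      ⟨fun x y h => by simpa using congrArg Subtype.val h, ?_⟩).symm
    rintro ⟨⟨b, x⟩ | _ | _, h⟩ <;>
      simp only [uniClass, Sum.map_inl, Sum.map_inr, Sum.inl.injEq, reduceCtorEq] at h
    subst h
    exact ⟨x, rfl⟩
  · rw [Sum.elim_inr, Sum.elim_inl, ← Nat.card_fin (u j)]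
    refine (Nat.card_eq_of_bijective (fun x => ⟨.inr (.inl ⟨j, x⟩), rfl⟩)
      ⟨fun x y h => by simpa using congrArg Subtype.val h, ?_⟩).symm
    rintro ⟨_ | ⟨b, x⟩ | _, h⟩ <;> simp only [uniClass, Sum.map_inl, Sum.map_inr,
      Sum.inl.injEq, Sum.inr.injEq, reduceCtorEq] at h
    subst h
    exact ⟨x, rfl⟩
  · refine Nat.card_eq_one_iff_exists.2 ⟨⟨.inr (.inr a), rfl⟩, ?_⟩
    rintro ⟨_ | _ | b, h⟩ <;>
      simp only [uniClass, Sum.map_inl, Sum.map_inr, Sum.inr.injEq, id, reduceCtorEq] at h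
    subst h
    rfl

theorem prod_natCard_uniClass_erase_inl (i : Fin m) :
    ∏ κ ∈ univ.erase (.inl i), Nat.card {e : UniE m r'' v' t u // uniClass e = κ} =
      (∏ b ∈ univ.erase i, t b) * ∏ j, u j := by
  have herase : (univ : Finset (Fin m ⊕ Fin r'' ⊕ Fin v')).erase (.inl i) =
      (univ.erase i).disjSum univ := by
    ext (_ | _) <;> simp
  simp only [herase, prod_disjSum, Fintype.prod_sum_type, natCard_uniClass_eq, Sum.elim_inl,
    Sum.elim_inr, Pi.one_apply, prod_const_one, mul_one]

end Count

theorem stmt12 {V : Type} [Fintype V] (m r' r'' v' : ℕ) (hm : 3 ≤ m)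
    (t : Fin m → ℕ)
    (ht1 : ∀ i : Fin m, r' ≤ i.val → t i = 1)
    (u : Fin r'' → ℕ)
    (c : Fin m → V) (hc : Function.Injective c)
    (bp : Fin r'' → Sym2 V) (sp : Fin v' → Sym2 V)
    (hbp : ∀ j, ¬ (bp j).IsDiag) (hsp : ∀ a, ¬ (sp a).IsDiag)
    (hinj : Function.Injective (uniClassEnds m r'' v' c bp sp (by omega)))
    (hconn : (SimpleGraph.fromEdgeSet
      (Set.range (uniEnds m r'' v' t u c bp sp (by omega)))).Connected)
    (hV : Fintype.card V = m + r'' + v') :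
    Nat.card {T : Finset (UniE m r'' v' t u) //
        IsSpanningTree (uniEnds m r'' v' t u c bp sp (by omega)) T} =
      (∏ j, u j) *
        ((m - r') * (∏ i ∈ Finset.univ.filter (fun i : Fin m => i.val < r'), t i) +
          ∑ i ∈ Finset.univ.filter (fun i : Fin m => i.val < r'),
            ∏ b ∈ (Finset.univ.filter (fun b : Fin m => b.val < r')).erase i, t b) := by
  have hm0 : 0 < m := by omega
  have hconn' : (fromEdgeSet (Set.range (uniClassEnds m r'' v' c bp sp hm0))).Connected :=
    hconn.mono (fromEdgeSet_mono (uniEnds_eq_comp hm0 t u ▸ Set.range_comp_subset_range _ _))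
  calc _ = Nat.card {T : Finset (UniE m r'' v' t u) //
          Set.InjOn uniClass (T : Set (UniE m r'' v' t u)) ∧
            ∃ i, T.image uniClass = univ.erase (.inl i)} :=
        Nat.card_congr (Equiv.subtypeEquivRight fun T =>
          isSpanningTree_uniEnds_iff hm0 t u (by omega) hc hbp hsp hinj hconn' hV T)
    _ = ∑ i, (∏ b ∈ univ.erase i, t b) * ∏ j, u j := by
      rw [natCard_and_exists_eq fun i j h => Sum.inl_injective ((erase_inj _ (mem_univ _)).1 h)]
      simp only [natCard_injOn_image_eq, prod_natCard_uniClass_erase_inl]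
    _ = _ := by
      set R := univ.filter fun i : Fin m => i.val < r'
      have hR : m - #R = m - r' := by rw [Fin.card_filter_val_lt]; omega
      rw [← sum_mul, mul_comm,
        sum_prod_univ_erase_eq R t fun i hi => ht1 i (by simpa [R] using hi), Fintype.card_fin,
        hR, smul_eq_mul]
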